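/- Let β > ln 2. There exists a constant K (depending only on β) such that for every integer M ≥ 2 and every m ∈ {0,…,M−1}, under the product μ of M independent standard Gaussian measures on ℝ^M, μ{z : ∃ i ≠ m with z_i ≥ √(2·β·log₂ M) + z_m} ≤ K·exp(−(log₂ M)·E(β)). That is, M-ary orthogonal signaling with normalized energy per bit β under ML detection achieves error probability decaying exponentially in the number of bits log₂ M with exponent E(β). -/

import Mathlib

/-!
Write the threshold as `A = u p` with `u = √(2n)`, `p = √β`, `q = √(ln 2)`, `n = log₂ M`, and
split the error event at a level `c` of the true statistic: either `Z_m ≤ c`, or some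
`Z_i ≥ A + Z_m` while `Z_m > c`. On the latter event `l Z_i + (k - l) Z_m ≥ l A + k c` for all
`l, k ≥ 0`, and `l Z_i + (k - l) Z_m` is a centred Gaussian, so both pieces have Chernoff bounds;
the union bound over the false messages costs a factor `M = exp (u² q² / 2)`. Taking
`c = -u (p - q)` and the optimal Chernoff parameters makes both pieces `exp (-n E(β))`. For
`β > 4 ln 2` the optimal `k` is `0`: the plain union bound on `Z_i - Z_m ≥ A` is already sharp.
-/

open MeasureTheory ProbabilityTheory

/-- The per-bit orthogonal-coding error exponent `E(β)` as a function of the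
normalized energy per bit `β = E_b/N₀`:
`E(β) = (β/(2 ln 2) − 1)·ln 2` if `β > 4 ln 2`,
`E(β) = (√(β/ln 2) − 1)²·ln 2` if `ln 2 < β ≤ 4 ln 2`, and `E(β) = 0`
otherwise. -/
noncomputable def Eperbit (β : ℝ) : ℝ :=
  if 4 * Real.log 2 < β then (β / (2 * Real.log 2) - 1) * Real.log 2
  else if Real.log 2 < β then (Real.sqrt (β / Real.log 2) - 1) ^ 2 * Real.log 2
  else 0

open Real
open scoped NNReal

lemma measure_ge_le_exp_of_map_eq_gaussianReal {Ω : Type*} [MeasurableSpace Ω] {P : Measure Ω}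
    {X : Ω → ℝ} {μ : ℝ} {v : ℝ≥0} (hX : P.map X = gaussianReal μ v) (r : ℝ) :
    P {ω | r ≤ X ω} ≤ ENNReal.ofReal (exp (μ + v / 2 - r)) := by
  have hXm : AEMeasurable X P := aemeasurable_of_map_neZero (by rw [hX]; infer_instance)
  have hchernoff := measure_ge_le_exp_mul_mgf (μ := gaussianReal μ v) (X := id) r zero_le_one
    (by simpa using integrable_exp_mul_gaussianReal (μ := μ) (v := v) 1)
  rw [mgf_id_gaussianReal, ← exp_add] at hchernoff
  rw [show {ω | r ≤ X ω} = X ⁻¹' {x | r ≤ id x} from rfl, ← Measure.map_apply₀ hXm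
    (measurableSet_le measurable_const measurable_id).nullMeasurableSet, hX, ← ofReal_measureReal]
  exact ENNReal.ofReal_le_ofReal (hchernoff.trans_eq (by ring_nf))

section PiGaussian

variable {ι : Type*} [Fintype ι]

lemma map_pi_gaussianReal_const_mul_eval {μ : ι → ℝ} {v : ι → ℝ≥0} (a : ℝ) (i : ι) :
    (Measure.pi fun k => gaussianReal (μ k) (v k)).map (fun z => a * z i)
      = gaussianReal (a * μ i) (.mk (a ^ 2) (sq_nonneg a) * v i) := by
  rw [show (fun z : ι → ℝ => a * z i) = (a * ·) ∘ Function.eval i from rfl,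
    ← Measure.map_map (measurable_const_mul a) (measurable_pi_apply i),
    (measurePreserving_eval _ i).map_eq, gaussianReal_map_const_mul]

lemma map_pi_gaussianReal_const_mul_eval_add {μ : ι → ℝ} {v : ι → ℝ≥0} {i j : ι} (hij : i ≠ j)
    (a b : ℝ) :
    (Measure.pi fun k => gaussianReal (μ k) (v k)).map (fun z => a * z i + b * z j)
      = gaussianReal (a * μ i + b * μ j)
          (.mk (a ^ 2) (sq_nonneg a) * v i + .mk (b ^ 2) (sq_nonneg b) * v j) := by
  have hindep : IndepFun (fun z : ι → ℝ => a * z i) (fun z => b * z j)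
      (Measure.pi fun k => gaussianReal (μ k) (v k)) :=
    ((iIndepFun_pi (X := fun _ => id) fun _ => aemeasurable_id).indepFun hij).comp
      (measurable_const_mul a) (measurable_const_mul b)
  exact gaussianReal_add_gaussianReal_of_indepFun hindep
    (map_pi_gaussianReal_const_mul_eval a i) (map_pi_gaussianReal_const_mul_eval b j)

local notation "γ" => Measure.pi fun _ : ι => gaussianReal 0 1

lemma pi_gaussianReal_ge_le_exp {i j : ι} (hij : i ≠ j) (a b r : ℝ) :
    γ {z | r ≤ a * z i + b * z j} ≤ ENNReal.ofReal (exp ((a ^ 2 + b ^ 2) / 2 - r)) := by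
  have hlaw := map_pi_gaussianReal_const_mul_eval_add (μ := fun _ => 0) (v := fun _ => 1) hij a b
  refine (measure_ge_le_exp_of_map_eq_gaussianReal hlaw r).trans_eq ?_
  simp only [NNReal.coe_add, NNReal.coe_mk, mul_zero, mul_one, add_zero, zero_add]

lemma pi_gaussianReal_eval_le_le_exp (j : ι) {s : ℝ} (hs : 0 ≤ s) (c : ℝ) :
    γ {z | z j ≤ c} ≤ ENNReal.ofReal (exp (s ^ 2 / 2 + s * c)) := by
  calc γ {z | z j ≤ c} ≤ γ {z | -(s * c) ≤ -s * z j} :=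
        measure_mono fun z (hz : z j ≤ c) =>
          show -(s * c) ≤ -s * z j by nlinarith
    _ ≤ ENNReal.ofReal (exp (s ^ 2 / 2 + s * c)) := by
        have hlaw := map_pi_gaussianReal_const_mul_eval (μ := fun _ => 0) (v := fun _ => 1) (-s) j
        refine (measure_ge_le_exp_of_map_eq_gaussianReal hlaw _).trans_eq ?_
        simp only [NNReal.coe_mk, mul_zero, mul_one, zero_add, neg_sq, sub_neg_eq_add]

def mlErrorSet (A : ℝ) (m : ι) : Set (ι → ℝ) := {z | ∃ i, i ≠ m ∧ z i ≥ A + z m}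

lemma mlErrorSet_subset [DecidableEq ι] (A c : ℝ) (m : ι) {l k : ℝ} (hl : 0 ≤ l) (hk : 0 ≤ k) :
    mlErrorSet A m ⊆ {z | z m ≤ c} ∪
      ⋃ i ∈ Finset.univ.erase m, {z | l * A + k * c ≤ l * z i + (k - l) * z m} := by
  rintro z ⟨i, hne, hi⟩
  rcases le_or_gt (z m) c with hc | hc
  · exact Or.inl hc
  · refine Or.inr (Set.mem_biUnion (Finset.mem_erase.2 ⟨hne, Finset.mem_univ i⟩) ?_)
    show l * A + k * c ≤ l * z i + (k - l) * z m
    nlinarith [mul_le_mul_of_nonneg_left hi hl, mul_le_mul_of_nonneg_left hc.le hk]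

lemma pi_gaussianReal_mlErrorSet_le (A c : ℝ) (m : ι) {s l k : ℝ} (hs : 0 ≤ s) (hl : 0 ≤ l)
    (hk : 0 ≤ k) :
    γ (mlErrorSet A m) ≤ ENNReal.ofReal (exp (s ^ 2 / 2 + s * c)
      + Fintype.card ι * exp ((l ^ 2 + (k - l) ^ 2) / 2 - (l * A + k * c))) := by
  classical
  calc γ (mlErrorSet A m)
      ≤ γ {z | z m ≤ c} + ∑ i ∈ Finset.univ.erase m,
          γ {z | l * A + k * c ≤ l * z i + (k - l) * z m} :=
        (measure_mono (mlErrorSet_subset A c m hl hk)).trans <|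
          (measure_union_le _ _).trans (add_le_add_right (measure_biUnion_finset_le _ _) _)
    _ ≤ ENNReal.ofReal (exp (s ^ 2 / 2 + s * c)) + ∑ i ∈ Finset.univ.erase m,
          ENNReal.ofReal (exp ((l ^ 2 + (k - l) ^ 2) / 2 - (l * A + k * c))) := by
        gcongr with i hi
        · exact pi_gaussianReal_eval_le_le_exp m hs c
        · exact pi_gaussianReal_ge_le_exp (Finset.ne_of_mem_erase hi) _ _ _
    _ ≤ _ := by
        rw [Finset.sum_const, nsmul_eq_mul, ENNReal.ofReal_add (by positivity) (by positivity),
          ENNReal.ofReal_mul (by positivity), ENNReal.ofReal_natCast]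
        gcongr
        exact Finset.card_le_univ _

lemma pi_gaussianReal_mlErrorSet_le_of_le_two_mul (m : ι) {u p q : ℝ} (hu : 0 ≤ u)
    (hqp : q ≤ p) (hpq : p ≤ 2 * q) (hcard : (Fintype.card ι : ℝ) ≤ exp (u ^ 2 * q ^ 2 / 2)) :
    γ (mlErrorSet (u * p) m) ≤ ENNReal.ofReal (2 * exp (-(u ^ 2 * (p - q) ^ 2 / 2))) := by
  refine (pi_gaussianReal_mlErrorSet_le (u * p) (u * (q - p)) m (s := u * (p - q))
    (l := u * q) (k := u * (2 * q - p)) (by nlinarith) (by nlinarith) (by nlinarith)).trans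
    (ENNReal.ofReal_le_ofReal ?_)
  calc _ ≤ exp (-(u ^ 2 * (p - q) ^ 2 / 2))
        + exp (u ^ 2 * q ^ 2 / 2) * exp (-(u ^ 2 * (q ^ 2 + (p - q) ^ 2) / 2)) := by
        rw [show (u * (p - q)) ^ 2 / 2 + u * (p - q) * (u * (q - p)) = -(u ^ 2 * (p - q) ^ 2 / 2)
          by ring]
        rw [show ((u * q) ^ 2 + (u * (2 * q - p) - u * q) ^ 2) / 2
          - (u * q * (u * p) + u * (2 * q - p) * (u * (q - p)))
          = -(u ^ 2 * (q ^ 2 + (p - q) ^ 2) / 2) by ring]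
        gcongr
    _ = 2 * exp (-(u ^ 2 * (p - q) ^ 2 / 2)) := by
        rw [← exp_add]
        ring_nf

lemma pi_gaussianReal_mlErrorSet_le_of_two_mul_le (m : ι) {u p q : ℝ} (hu : 0 ≤ u)
    (hq : 0 ≤ q) (h2q : 2 * q ≤ p) (hcard : (Fintype.card ι : ℝ) ≤ exp (u ^ 2 * q ^ 2 / 2)) :
    γ (mlErrorSet (u * p) m) ≤ ENNReal.ofReal (2 * exp (-(u ^ 2 * (p ^ 2 / 4 - q ^ 2 / 2)))) := by
  refine (pi_gaussianReal_mlErrorSet_le (u * p) (u * (q - p)) m (s := u * (p - q))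
    (l := u * p / 2) (k := 0) (by nlinarith) (by nlinarith) le_rfl).trans
    (ENNReal.ofReal_le_ofReal ?_)
  calc _ ≤ exp (-(u ^ 2 * (p ^ 2 / 4 - q ^ 2 / 2)))
        + exp (u ^ 2 * q ^ 2 / 2) * exp (-(u ^ 2 * p ^ 2 / 4)) := by
        rw [show ((u * p / 2) ^ 2 + (0 - u * p / 2) ^ 2) / 2
          - (u * p / 2 * (u * p) + 0 * (u * (q - p))) = -(u ^ 2 * p ^ 2 / 4) by ring]
        gcongr
        nlinarith [sq_nonneg (u * (p - 2 * q))]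
    _ = 2 * exp (-(u ^ 2 * (p ^ 2 / 4 - q ^ 2 / 2))) := by
        rw [← exp_add]
        ring_nf

end PiGaussian

lemma Eperbit_of_lt_of_le {β : ℝ} (h₁ : Real.log 2 < β) (h₂ : β ≤ 4 * Real.log 2) :
    Eperbit β = (√β - √(Real.log 2)) ^ 2 := by
  have hL : 0 < √(Real.log 2) := sqrt_pos.2 (log_pos one_lt_two)
  calc Eperbit β = (√β / √(Real.log 2) - 1) ^ 2 * √(Real.log 2) ^ 2 := by
        rw [Eperbit, if_neg h₂.not_gt, if_pos h₁, sqrt_div' _ (log_pos one_lt_two).le,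
          sq_sqrt (log_pos one_lt_two).le]
    _ = (√β - √(Real.log 2)) ^ 2 := by field_simp

lemma Eperbit_of_lt {β : ℝ} (h : 4 * Real.log 2 < β) : Eperbit β = β / 2 - Real.log 2 := by
  have := log_pos one_lt_two
  rw [Eperbit, if_pos h]
  field_simp

/-- For every normalized energy per bit `β > ln 2`, `M`-ary orthogonal
signaling under ML detection achieves an error probability decaying
exponentially in the number of bits `log₂ M` with exponent `E(β)`:
there is a constant `K` (depending only on `β`) so that for all `M ≥ 2` and
every true message `m`, the probability that some false statistic `Z_i`
(`i ≠ m`) exceeds the true statistic `√(2·β·log₂ M) + Z_m` is at most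
`K·exp(−(log₂ M)·E(β))`. -/
theorem orthogonal_ML_error_exponent (β : ℝ) (hβ : Real.log 2 < β) :
    ∃ K : ℝ, 0 < K ∧ ∀ M : ℕ, 2 ≤ M → ∀ m : Fin M,
      (Measure.pi fun _ : Fin M => gaussianReal 0 1)
          {z | ∃ i, i ≠ m ∧ z i ≥ Real.sqrt (2 * β * Real.logb 2 M) + z m} ≤
        ENNReal.ofReal (K * Real.exp (-(Real.logb 2 M) * Eperbit β)) := by
  refine ⟨2, two_pos, fun M hM m => ?_⟩
  have hlog2 : 0 < Real.log 2 := log_pos one_lt_two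
  set n := logb 2 M
  have hn : 0 ≤ n := logb_nonneg one_lt_two (by exact_mod_cast (one_le_two.trans hM))
  have hu : √(2 * n) ^ 2 = 2 * n := sq_sqrt (by positivity)
  have hq : √(Real.log 2) ^ 2 = Real.log 2 := sq_sqrt hlog2.le
  have hcard : (Fintype.card (Fin M) : ℝ) ≤ exp (√(2 * n) ^ 2 * √(Real.log 2) ^ 2 / 2) := by
    have hnL : n * Real.log 2 = Real.log M := div_mul_cancel₀ _ hlog2.ne'
    rw [hu, hq, show 2 * n * Real.log 2 / 2 = Real.log M by rw [← hnL]; ring,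
      exp_log (by positivity), Fintype.card_fin]
  rw [show 2 * β * n = 2 * n * β by ring, sqrt_mul (by positivity)]
  rcases le_or_gt β (4 * Real.log 2) with hle | hlt
  · refine (pi_gaussianReal_mlErrorSet_le_of_le_two_mul m (sqrt_nonneg _)
      (sqrt_le_sqrt hβ.le) ?_ hcard).trans_eq ?_
    · rw [sqrt_le_iff]
      exact ⟨by positivity, by rw [mul_pow, hq]; linarith⟩
    · rw [Eperbit_of_lt_of_le hβ hle, hu]; ring_nf
  · refine (pi_gaussianReal_mlErrorSet_le_of_two_mul_le m (sqrt_nonneg _) (sqrt_nonneg _) ?_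
      hcard).trans_eq ?_
    · rw [le_sqrt (by positivity) (by linarith), mul_pow, hq]
      linarith
    · rw [Eperbit_of_lt hlt, hu, hq, sq_sqrt (hlog2.trans hβ).le]; ring_nf
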